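/- arXiv:1002.2971 — 8 statements merged into one kernel-verified Lean document; each statement's English description precedes it below -/
import Mathlib

section
/- Let X1, ..., Xn be pairwise independent Bernoulli random variables (taking values in {0,1}) such that P(X1 = X2 = ... = Xn = 0) ≥ 1/2. Then (1/n) · Σ_{i=1}^n P(Xi = 0) ≥ 1 − 2/n. -/
/-!
Let `S = ∑ 𝟙_{Xᵢ = 1}`, with mean `m = ∑ P(Xᵢ = 1)`. Pairwise independence makes the
variance additive and a Bernoulli variable has variance `p (1 - p) ≤ p`, so `Var S ≤ m`.
By Chebyshev, `P(S = 0) ≤ P(|S - m| ≥ m) ≤ Var S / m² ≤ 1 / m`, so `P(S = 0) · m ≤ 1`,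
and `P(S = 0) ≥ 1/2` forces `m ≤ 2`.
-/

open MeasureTheory ProbabilityTheory

namespace ProbabilityTheory

variable {Ω : Type*} [MeasurableSpace Ω] {μ : Measure Ω}

lemma IndepSet.indepFun_indicator_one {s t : Set Ω} (h : IndepSet s t μ) :
    s.indicator (1 : Ω → ℝ) ⟂ᵢ[μ] t.indicator (1 : Ω → ℝ) := by
  let mt : MeasurableSpace Ω := .generateFrom {t}
  have ht : Measurable[mt] (t.indicator (1 : Ω → ℝ)) :=
    (@measurable_const _ _ _ mt 1).indicator
      (MeasurableSpace.measurableSet_generateFrom (Set.mem_singleton t))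
  exact Indep.indicator_indepFun 1
    (MeasurableSpace.measurableSet_generateFrom (Set.mem_singleton s))
    (indep_of_indep_of_le_right h ht.comap_le)

lemma variance_indicator_one_le [IsProbabilityMeasure μ] {s : Set Ω}
    (hs : MeasurableSet s) : Var[s.indicator 1; μ] ≤ μ.real s := by
  have hbound : ∀ ω, s.indicator (1 : Ω → ℝ) ω ∈ Set.Icc 0 1 := fun ω => by
    by_cases hω : ω ∈ s <;> simp [hω]
  have h := variance_le_sub_mul_sub (ae_of_all μ hbound) (measurable_one.indicator hs).aemeasurable
  rw [integral_indicator_one hs] at h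
  nlinarith [measureReal_nonneg (μ := μ) (s := s)]

lemma measureReal_eq_zero_le_variance_div_sq [IsFiniteMeasure μ] {X : Ω → ℝ}
    (hX : MemLp X 2 μ) (hpos : 0 < μ[X]) :
    μ.real {ω | X ω = 0} ≤ Var[X; μ] / μ[X] ^ 2 := by
  have hsub : {ω | X ω = 0} ⊆ {ω | μ[X] ≤ |X ω - μ[X]|} := fun ω hω => by
    simp_all [abs_of_pos hpos]
  calc μ.real {ω | X ω = 0} ≤ μ.real {ω | μ[X] ≤ |X ω - μ[X]|} := measureReal_mono hsub
    _ ≤ Var[X; μ] / μ[X] ^ 2 :=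
      ENNReal.toReal_le_of_le_ofReal (div_nonneg (variance_nonneg X μ) (sq_nonneg _))
        (meas_ge_le_variance_div_sq hX hpos)

variable [IsProbabilityMeasure μ] {ι : Type*} [Fintype ι] {A : ι → Set Ω}

lemma integral_sum_indicator_one (hA : ∀ i, MeasurableSet (A i)) :
    μ[∑ i, (A i).indicator 1] = ∑ i, μ.real (A i) := by
  simp only [Finset.sum_apply]
  rw [integral_finsetSum _ fun i _ => (integrable_const 1).indicator (hA i)]
  exact Finset.sum_congr rfl fun i _ => integral_indicator_one (hA i)

lemma variance_sum_indicator_one_le (hA : ∀ i, MeasurableSet (A i))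
    (hindep : Pairwise fun i j => IndepSet (A i) (A j) μ) :
    Var[∑ i, (A i).indicator 1; μ] ≤ ∑ i, μ.real (A i) := by
  rw [IndepFun.variance_sum (X := fun i => (A i).indicator 1)
    (fun i _ => memLp_indicator_const 2 (hA i) 1 (Or.inr (measure_ne_top μ _)))
    fun i _ j _ hij => (hindep hij).indepFun_indicator_one]
  exact Finset.sum_le_sum fun i _ => variance_indicator_one_le (hA i)

theorem measureReal_iInter_compl_mul_sum_le_one
    (hA : ∀ i, MeasurableSet (A i)) (hindep : Pairwise fun i j => IndepSet (A i) (A j) μ) :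
    μ.real (⋂ i, (A i)ᶜ) * ∑ i, μ.real (A i) ≤ 1 := by
  set S : Ω → ℝ := ∑ i, (A i).indicator 1
  set m := ∑ i, μ.real (A i)
  have hmean : μ[S] = m := integral_sum_indicator_one hA
  rcases (Finset.sum_nonneg fun i _ => measureReal_nonneg : 0 ≤ m).eq_or_lt with hm | hm
  · rw [← show 0 = m from hm, mul_zero]
    exact zero_le_one
  have hnone : ⋂ i, (A i)ᶜ ⊆ {ω | S ω = 0} := fun ω hω => by
    simp_all [S, Set.indicator_of_notMem]
  have hS : MemLp S 2 μ := memLp_finsetSum' _ fun i _ =>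
    memLp_indicator_const 2 (hA i) 1 (Or.inr (measure_ne_top μ _))
  have hchebyshev := measureReal_eq_zero_le_variance_div_sq hS (hmean ▸ hm)
  rw [hmean] at hchebyshev
  calc μ.real (⋂ i, (A i)ᶜ) * m ≤ Var[S; μ] / m ^ 2 * m := by
        gcongr
        exact (measureReal_mono hnone).trans hchebyshev
    _ ≤ m / m ^ 2 * m := by gcongr; exact variance_sum_indicator_one_le hA hindep
    _ = 1 := by field_simp [show m ≠ 0 from hm.ne']

end ProbabilityTheory

theorem stmt_0 {Ω : Type*} [MeasurableSpace Ω] (μ : Measure Ω) [IsProbabilityMeasure μ]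
    (n : ℕ) (hn : 0 < n) (X : Fin n → Ω → Bool)
    (hmeas : ∀ i, Measurable (X i))
    (hindep : ∀ i j, i ≠ j → ∀ a b : Bool,
      μ ({ω | X i ω = a} ∩ {ω | X j ω = b}) = μ {ω | X i ω = a} * μ {ω | X j ω = b})
    (h0 : (1 : ℝ)/2 ≤ (μ {ω | ∀ i, X i ω = false}).toReal) :
    1 - 2/(n : ℝ) ≤ (1/(n : ℝ)) * ∑ i, (μ {ω | X i ω = false}).toReal := by
  set A : Fin n → Set Ω := fun i => {ω | X i ω = true}
  have hA : ∀ i, MeasurableSet (A i) := fun i => hmeas i (measurableSet_singleton true)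
  have hnone : {ω | ∀ i, X i ω = false} = ⋂ i, (A i)ᶜ := by ext; simp [A]
  have hfalse : ∀ i, {ω | X i ω = false} = (A i)ᶜ := fun i => by ext; simp [A]
  have hindepSet : Pairwise fun i j => IndepSet (A i) (A j) μ := fun i j hij =>
    (indepSet_iff_measure_inter_eq_mul (hA i) (hA j) μ).2 (hindep i j hij true true)
  have hprod := measureReal_iInter_compl_mul_sum_le_one hA hindepSet
  rw [← hnone] at hprod
  rw [← measureReal_def] at h0
  have hm0 : 0 ≤ ∑ i, μ.real (A i) := Finset.sum_nonneg fun i _ => measureReal_nonneg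
  have hm : ∑ i, μ.real (A i) ≤ 2 := by nlinarith
  simp_rw [hfalse, ← measureReal_def, probReal_compl_eq_one_sub (hA _), Finset.sum_sub_distrib,
    Finset.sum_const, Finset.card_univ, Fintype.card_fin, nsmul_eq_mul, mul_one]
  have hn' : (0 : ℝ) < n := Nat.cast_pos.2 hn
  field_simp
  linarith
end

section
/- Let X1, X2, X3 be pairwise independent Bernoulli random variables (values in {0,1}) with P(X1 = X2 = X3 = 0) ≥ 1/2, and suppose P(X1 = 0) < 1 and P(X2 = 0) < 1. Let p = max(P(X1 = 0), P(X2 = 0)). Then P(X3 = 0) ≥ 1/2 + p(1−p)/(2p−1). -/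
/-!
Write `A, B, C` for the events `Xᵢ = 0` and `a, b, q` for their probabilities, `a ≥ b` say.
Inclusion–exclusion on `C` gives
`P(Aᶜ ∩ C) + P(Bᶜ ∩ C) + P(A ∩ B ∩ C) = P(C) + P(Aᶜ ∩ Bᶜ ∩ C)`, and pairwise independence turns
this into `(1 - a) q + (1 - b) q + 1/2 ≤ q + (1 - a)(1 - b)`. Since `a, q ≥ P(A ∩ B ∩ C) ≥ 1/2`,
this rearranges to `a (1 - a) ≤ (q - 1/2)(2a - 1) - (a - b)(q + a - 1) ≤ (q - 1/2)(2a - 1)`.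
-/
open MeasureTheory

section

variable {Ω : Type*} [MeasurableSpace Ω]

lemma measureReal_compl_inter_add_compl_inter (μ : Measure Ω) [IsFiniteMeasure μ]
    {A B : Set Ω} (hA : MeasurableSet A) (hB : MeasurableSet B) (C : Set Ω) :
    μ.real (Aᶜ ∩ C) + μ.real (Bᶜ ∩ C) + μ.real (A ∩ B ∩ C) =
      μ.real C + μ.real (Aᶜ ∩ Bᶜ ∩ C) := by
  have hC := measureReal_inter_add_sdiff (μ := μ) (s := C) hA
  have hCA := measureReal_inter_add_sdiff (μ := μ) (s := C ∩ A) hB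
  have hCB := measureReal_inter_add_sdiff (μ := μ) (s := Bᶜ ∩ C) hA
  have e1 : C \ A = Aᶜ ∩ C := by rw [Set.sdiff_eq, Set.inter_comm]
  have e2 : C ∩ A ∩ B = A ∩ B ∩ C := by ac_rfl
  have e3 : (C ∩ A) \ B = Bᶜ ∩ C ∩ A := by
    ext; simp only [Set.mem_sdiff, Set.mem_inter_iff, Set.mem_compl_iff]; tauto
  have e4 : (Bᶜ ∩ C) \ A = Aᶜ ∩ Bᶜ ∩ C := by
    ext; simp only [Set.mem_sdiff, Set.mem_inter_iff, Set.mem_compl_iff]; tauto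
  rw [e1] at hC
  rw [e2, e3] at hCA
  rw [e4] at hCB
  linarith

lemma mul_one_sub_le_of_le {a b q e : ℝ} (hba : b ≤ a) (he : 1 / 2 ≤ e) (hea : e ≤ a) (heq : e ≤ q)
    (h : e + (1 - a) * q + (1 - b) * q ≤ q + (1 - a) * (1 - b)) :
    a * (1 - a) ≤ (q - 1 / 2) * (2 * a - 1) := by
  nlinarith [mul_nonneg (sub_nonneg.2 hba) (by linarith : (0 : ℝ) ≤ q + a - 1)]

lemma half_add_max_div_le {a b q e : ℝ} (he : 1 / 2 ≤ e) (hea : e ≤ a) (heb : e ≤ b) (heq : e ≤ q)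
    (h : e + (1 - a) * q + (1 - b) * q ≤ q + (1 - a) * (1 - b)) :
    1 / 2 + max a b * (1 - max a b) / (2 * max a b - 1) ≤ q := by
  suffices key : max a b * (1 - max a b) ≤ (q - 1 / 2) * (2 * max a b - 1) by
    have := div_le_of_le_mul₀ (by linarith [le_max_left a b]) (by linarith) key
    linarith
  rcases le_total b a with hba | hab
  · rw [max_eq_left hba]
    exact mul_one_sub_le_of_le hba he hea heq h
  · rw [max_eq_right hab]
    exact mul_one_sub_le_of_le hab he heb heq (by linarith)

theorem half_add_max_div_le_probReal (μ : Measure Ω) [IsProbabilityMeasure μ] {A B C : Set Ω}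
    (hA : MeasurableSet A) (hB : MeasurableSet B)
    (hAB : μ.real (Aᶜ ∩ Bᶜ) = μ.real Aᶜ * μ.real Bᶜ)
    (hAC : μ.real (Aᶜ ∩ C) = μ.real Aᶜ * μ.real C)
    (hBC : μ.real (Bᶜ ∩ C) = μ.real Bᶜ * μ.real C)
    (h0 : 1 / 2 ≤ μ.real (A ∩ B ∩ C)) :
    1 / 2 + max (μ.real A) (μ.real B) * (1 - max (μ.real A) (μ.real B))
        / (2 * max (μ.real A) (μ.real B) - 1) ≤ μ.real C := by
  have hABC : μ.real (Aᶜ ∩ Bᶜ ∩ C) ≤ μ.real (Aᶜ ∩ Bᶜ) := measureReal_mono Set.inter_subset_left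
  have hsum := measureReal_compl_inter_add_compl_inter μ hA hB C
  rw [hAC, hBC, probReal_compl_eq_one_sub hA, probReal_compl_eq_one_sub hB] at hsum
  rw [hAB, probReal_compl_eq_one_sub hA, probReal_compl_eq_one_sub hB] at hABC
  exact half_add_max_div_le h0
    (measureReal_mono (Set.inter_subset_left.trans Set.inter_subset_left))
    (measureReal_mono (Set.inter_subset_left.trans Set.inter_subset_right))
    (measureReal_mono Set.inter_subset_right) (by linarith)

end

theorem stmt_1_general {Ω : Type*} [MeasurableSpace Ω] (μ : Measure Ω) [IsProbabilityMeasure μ]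
    (X₁ X₂ X₃ : Ω → Bool)
    (h₁ : Measurable X₁) (h₂ : Measurable X₂)
    (hindep₁₂ : ∀ a b : Bool, μ ({ω | X₁ ω = a} ∩ {ω | X₂ ω = b}) =
      μ {ω | X₁ ω = a} * μ {ω | X₂ ω = b})
    (hindep₁₃ : ∀ a b : Bool, μ ({ω | X₁ ω = a} ∩ {ω | X₃ ω = b}) =
      μ {ω | X₁ ω = a} * μ {ω | X₃ ω = b})
    (hindep₂₃ : ∀ a b : Bool, μ ({ω | X₂ ω = a} ∩ {ω | X₃ ω = b}) =
      μ {ω | X₂ ω = a} * μ {ω | X₃ ω = b})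
    (h0 : (1 : ℝ)/2 ≤ (μ {ω | X₁ ω = false ∧ X₂ ω = false ∧ X₃ ω = false}).toReal) :
    1/2 + (max (μ {ω | X₁ ω = false}).toReal (μ {ω | X₂ ω = false}).toReal)
        * (1 - max (μ {ω | X₁ ω = false}).toReal (μ {ω | X₂ ω = false}).toReal)
        / (2 * max (μ {ω | X₁ ω = false}).toReal (μ {ω | X₂ ω = false}).toReal - 1)
      ≤ (μ {ω | X₃ ω = false}).toReal := by
  have compl_eq : ∀ X : Ω → Bool, {ω | X ω = false}ᶜ = {ω | X ω = true} := fun X => by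
    ext; simp
  have real_of_mul : ∀ s t : Set Ω, μ (s ∩ t) = μ s * μ t → μ.real (s ∩ t) = μ.real s * μ.real t :=
    fun s t h => by simp only [measureReal_def, h, ENNReal.toReal_mul]
  refine half_add_max_div_le_probReal μ (measurableSet_eq_fun h₁ measurable_const)
    (measurableSet_eq_fun h₂ measurable_const) ?_ ?_ ?_ (by rwa [Set.inter_assoc])
  all_goals simp only [compl_eq]
  exacts [real_of_mul _ _ (hindep₁₂ true true), real_of_mul _ _ (hindep₁₃ true false),
    real_of_mul _ _ (hindep₂₃ true false)]

theorem stmt_1 {Ω : Type*} [MeasurableSpace Ω] (μ : Measure Ω) [IsProbabilityMeasure μ]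
    (X₁ X₂ X₃ : Ω → Bool)
    (h₁ : Measurable X₁) (h₂ : Measurable X₂) (h₃ : Measurable X₃)
    (hindep₁₂ : ∀ a b : Bool, μ ({ω | X₁ ω = a} ∩ {ω | X₂ ω = b}) =
      μ {ω | X₁ ω = a} * μ {ω | X₂ ω = b})
    (hindep₁₃ : ∀ a b : Bool, μ ({ω | X₁ ω = a} ∩ {ω | X₃ ω = b}) =
      μ {ω | X₁ ω = a} * μ {ω | X₃ ω = b})
    (hindep₂₃ : ∀ a b : Bool, μ ({ω | X₂ ω = a} ∩ {ω | X₃ ω = b}) =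
      μ {ω | X₂ ω = a} * μ {ω | X₃ ω = b})
    (h0 : (1 : ℝ)/2 ≤ (μ {ω | X₁ ω = false ∧ X₂ ω = false ∧ X₃ ω = false}).toReal)
    (hp₁ : (μ {ω | X₁ ω = false}).toReal < 1)
    (hp₂ : (μ {ω | X₂ ω = false}).toReal < 1) :
    1/2 + (max (μ {ω | X₁ ω = false}).toReal (μ {ω | X₂ ω = false}).toReal)
        * (1 - max (μ {ω | X₁ ω = false}).toReal (μ {ω | X₂ ω = false}).toReal)
        / (2 * max (μ {ω | X₁ ω = false}).toReal (μ {ω | X₂ ω = false}).toReal - 1)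
      ≤ (μ {ω | X₃ ω = false}).toReal :=
  stmt_1_general μ X₁ X₂ X₃ h₁ h₂ hindep₁₂ hindep₁₃ hindep₂₃ h0
end

section
/- Let X1, X2, X3, X4 be pairwise independent Bernoulli random variables (values in {0,1}) such that P(X1 = X2 = X3 = X4 = 0) ≥ 1/2. Then Σ_{i=1}^4 P(Xi = 0) ≥ 3. -/
/-!
Let `A i` be the event `Xᵢ = 1`, `qᵢ = P(A i)` and `S = ∑ 1_{A i}`. Pointwise
`(S - 2·1_{⋃ A i})² ≥ 0`; taking expectations and using pairwise independence,
`4 ∑ qᵢ ≤ ∑ qᵢ + ∑_{i ≠ j} qᵢ qⱼ + 4 P(⋃ A i)`. The hypothesis gives `P(⋃ A i) ≤ 1/2`, hence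
`qᵢ ≤ 1/2`, and with `∑ qᵢ² ≥ s²/4` for `s = ∑ qᵢ` this becomes `3s ≤ 3s²/4 + 2`, which for
`s ≤ 2` forces `s ≤ 2 - 2/√3 < 1`.
-/

open MeasureTheory

section

variable {Ω ι : Type*} [Fintype ι]

lemma four_mul_sum_indicator_le (A : ι → Set Ω) (ω : Ω) :
    4 * ∑ i, (A i).indicator (1 : Ω → ℝ) ω
      ≤ ∑ i, ∑ j, (A i ∩ A j).indicator (1 : Ω → ℝ) ω + 4 * (⋃ i, A i).indicator 1 ω := by
  simp only [Set.inter_indicator_one, Pi.mul_apply, ← Finset.sum_mul_sum]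
  by_cases hω : ω ∈ ⋃ i, A i
  · rw [Set.indicator_of_mem hω, Pi.one_apply]
    nlinarith [sq_nonneg (∑ i, (A i).indicator (1 : Ω → ℝ) ω - 2)]
  · have hA : ∀ i, (A i).indicator (1 : Ω → ℝ) ω = 0 := fun i =>
      Set.indicator_of_notMem (fun h => hω (Set.mem_iUnion_of_mem i h)) _
    simp [hA, hω]

lemma four_mul_sum_measureReal_le [MeasurableSpace Ω] (μ : Measure Ω) [IsFiniteMeasure μ]
    (A : ι → Set Ω) (hA : ∀ i, MeasurableSet (A i)) :
    4 * ∑ i, μ.real (A i)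
      ≤ ∑ i, ∑ j, μ.real (A i ∩ A j) + 4 * μ.real (⋃ i, A i) := by
  have hint : ∀ {s : Set Ω}, MeasurableSet s → Integrable (s.indicator (1 : Ω → ℝ)) μ :=
    fun hs => (integrable_const 1).indicator hs
  have hAA : ∀ i j, MeasurableSet (A i ∩ A j) := fun i j => (hA i).inter (hA j)
  have hU : MeasurableSet (⋃ i, A i) := MeasurableSet.iUnion hA
  have hint_sum : Integrable (fun ω => ∑ i, (A i).indicator (1 : Ω → ℝ) ω) μ :=
    integrable_finsetSum _ fun i _ => hint (hA i)
  have hint_row : ∀ i, Integrable (fun ω => ∑ j, (A i ∩ A j).indicator (1 : Ω → ℝ) ω) μ :=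
    fun i => integrable_finsetSum _ fun j _ => hint (hAA i j)
  have hint_sum_sum : Integrable (fun ω => ∑ i, ∑ j, (A i ∩ A j).indicator (1 : Ω → ℝ) ω) μ :=
    integrable_finsetSum _ fun i _ => hint_row i
  calc 4 * ∑ i, μ.real (A i) = ∫ ω, 4 * ∑ i, (A i).indicator (1 : Ω → ℝ) ω ∂μ := by
        rw [integral_const_mul, integral_finsetSum _ fun i _ => hint (hA i)]
        simp only [integral_indicator_one (hA _)]
    _ ≤ ∫ ω, (∑ i, ∑ j, (A i ∩ A j).indicator (1 : Ω → ℝ) ω + 4 * (⋃ i, A i).indicator 1 ω) ∂μ :=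
        integral_mono (hint_sum.const_mul 4) (hint_sum_sum.add ((hint hU).const_mul 4))
          (four_mul_sum_indicator_le A)
    _ = ∑ i, ∑ j, μ.real (A i ∩ A j) + 4 * μ.real (⋃ i, A i) := by
        rw [integral_add hint_sum_sum ((hint hU).const_mul 4), integral_const_mul,
          integral_finsetSum _ fun i _ => hint_row i]
        simp only [integral_finsetSum _ fun j _ => hint (hAA _ j),
          integral_indicator_one (hAA _ _), integral_indicator_one hU]

end

lemma sum_le_one_of_four_mul_sum_le (q : Fin 4 → ℝ) (hq : ∀ i, q i ≤ 1 / 2)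
    (h : 4 * ∑ i, q i ≤ ∑ i, ∑ j, (if i = j then q i else q i * q j) + 2) :
    ∑ i, q i ≤ 1 := by
  simp only [Fin.sum_univ_four, Fin.isValue, if_true, Fin.reduceEq, if_false] at h ⊢
  nlinarith [hq 0, hq 1, hq 2, hq 3, sq_nonneg (q 0 - q 1), sq_nonneg (q 0 - q 2),
    sq_nonneg (q 0 - q 3), sq_nonneg (q 1 - q 2), sq_nonneg (q 1 - q 3), sq_nonneg (q 2 - q 3)]

theorem stmt_2 {Ω : Type*} [MeasurableSpace Ω] (μ : Measure Ω) [IsProbabilityMeasure μ]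
    (X : Fin 4 → Ω → Bool)
    (hmeas : ∀ i, Measurable (X i))
    (hindep : ∀ i j, i ≠ j → ∀ a b : Bool,
      μ ({ω | X i ω = a} ∩ {ω | X j ω = b}) = μ {ω | X i ω = a} * μ {ω | X j ω = b})
    (h0 : (1 : ℝ)/2 ≤ (μ {ω | ∀ i, X i ω = false}).toReal) :
    (3 : ℝ) ≤ ∑ i, (μ {ω | X i ω = false}).toReal := by
  set A : Fin 4 → Set Ω := fun i => {ω | X i ω = true}
  have hA : ∀ i, MeasurableSet (A i) := fun i => hmeas i (measurableSet_singleton true)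
  have h_all_false : {ω | ∀ i, X i ω = false} = (⋃ i, A i)ᶜ := by ext; simp [A]
  have h_false : ∀ i, {ω | X i ω = false} = (A i)ᶜ := fun i => by ext; simp [A]
  have h_union : μ.real (⋃ i, A i) ≤ 1 / 2 := by
    change 1 / 2 ≤ μ.real _ at h0
    rw [h_all_false, probReal_compl_eq_one_sub (MeasurableSet.iUnion hA)] at h0
    linarith
  have h_le : ∀ i, μ.real (A i) ≤ 1 / 2 :=
    fun i => (measureReal_mono (Set.subset_iUnion A i)).trans h_union
  have h_inter : ∀ i j, μ.real (A i ∩ A j)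
      = if i = j then μ.real (A i) else μ.real (A i) * μ.real (A j) := by
    intro i j
    split_ifs with hij
    · rw [hij, Set.inter_self]
    · simp only [measureReal_def, hindep i j hij, ENNReal.toReal_mul, A]
  have h_moment := four_mul_sum_measureReal_le μ A hA
  simp only [h_inter] at h_moment
  have h_sum := sum_le_one_of_four_mul_sum_le (fun i => μ.real (A i)) h_le (by linarith)
  change 3 ≤ ∑ i, μ.real _
  simp only [h_false, probReal_compl_eq_one_sub (hA _), Finset.sum_sub_distrib, Finset.sum_const,
    Finset.card_univ, Fintype.card_fin, nsmul_eq_mul, Nat.cast_ofNat, mul_one]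
  linarith
end

section
/- For real numbers p1, ..., pn ∈ [0,1] satisfying ∏_{j ∈ S} p_j ≥ 1/2 for every subset S ⊆ {1,...,n} of size k, if (1 − 1/n)^k ≤ 1/2 then Σ_{j=1}^n p_j ≥ n − 1. -/
/-!
By AM-GM, every `k`-subset `S` has `∑_{j ∈ S} p j ≥ k (1/2)^{1/k}`. Summing over all `k`-subsets,
each index is counted equally often, so averaging gives `∑ p j ≥ n (1/2)^{1/k}`, and the
hypothesis on `(1 - 1/n)^k` says exactly that `(1/2)^{1/k} ≥ 1 - 1/n`.
-/

open Finset

theorem Real.card_mul_prod_rpow_inv_card_le_sum {ι : Type*} (s : Finset ι) {z : ι → ℝ}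
    (hz : ∀ i ∈ s, 0 ≤ z i) :
    (#s : ℝ) * (∏ i ∈ s, z i) ^ ((#s : ℝ)⁻¹) ≤ ∑ i ∈ s, z i := by
  rcases s.eq_empty_or_nonempty with rfl | hs
  · simp
  have hcard : (0 : ℝ) < #s := by exact_mod_cast hs.card_pos
  have h := Real.geom_mean_le_arith_mean s (fun _ ↦ 1) z (fun _ _ ↦ zero_le_one)
    (by simpa using hcard) hz
  simp only [Real.rpow_one, one_mul, sum_const, nsmul_eq_mul, mul_one] at h
  rwa [le_div_iff₀ hcard, mul_comm] at h

theorem Finset.sum_powersetCard_sum {ι M : Type*} [Fintype ι] [DecidableEq ι] [AddCommMonoid M]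
    {k : ℕ} (hk : k ≠ 0) (f : ι → M) :
    ∑ S ∈ powersetCard k univ, ∑ j ∈ S, f j =
      (Fintype.card ι - 1).choose (k - 1) • ∑ j, f j := by
  rw [sum_comm' (t' := univ) (s' := fun j ↦ (powersetCard k univ).filter ({j} ⊆ ·))
    (fun S j ↦ by simp), smul_sum]
  refine sum_congr rfl fun j _ ↦ ?_
  rw [sum_const, card_filter_powersetCard_subset _ _ _ (subset_univ _)
    (by simpa using Nat.one_le_iff_ne_zero.2 hk), card_singleton, card_univ]

theorem card_mul_rpow_inv_le_sum_of_le_prod {ι : Type*} [Fintype ι] {p : ι → ℝ}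
    (hp : ∀ j, 0 ≤ p j) {k : ℕ} (hk : k ≠ 0) (hkn : k ≤ Fintype.card ι) {a : ℝ} (ha : 0 ≤ a)
    (hprod : ∀ S : Finset ι, #S = k → a ≤ ∏ j ∈ S, p j) :
    Fintype.card ι * a ^ ((k : ℝ)⁻¹) ≤ ∑ j, p j := by
  classical
  set m := (Fintype.card ι - 1).choose (k - 1)
  set N := #(powersetCard k (univ : Finset ι))
  have hamgm : ∀ S ∈ powersetCard k (univ : Finset ι),
      k * a ^ ((k : ℝ)⁻¹) ≤ ∑ j ∈ S, p j := by
    intro S hS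
    have hS : #S = k := mem_powersetCard_univ.1 hS
    calc (k : ℝ) * a ^ ((k : ℝ)⁻¹) ≤ k * (∏ j ∈ S, p j) ^ ((k : ℝ)⁻¹) := by
          gcongr
          exact hprod S hS
      _ ≤ ∑ j ∈ S, p j := hS ▸ Real.card_mul_prod_rpow_inv_card_le_sum S fun j _ ↦ hp j
  have hcount : (N : ℝ) * k = m * Fintype.card ι := by
    have h := sum_powersetCard_sum hk (fun _ : ι ↦ (1 : ℝ))
    simp only [sum_const, card_univ, nsmul_eq_mul, mul_one] at h
    rwa [sum_congr rfl fun S hS ↦ by rw [mem_powersetCard_univ.1 hS], sum_const,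
      nsmul_eq_mul] at h
  have hN : 0 < N := by simpa [N] using Nat.choose_pos hkn
  have hm : (0 : ℝ) < m := by
    have : (0 : ℝ) < N * k := by positivity
    exact pos_of_mul_pos_left (hcount ▸ this) (Nat.cast_nonneg _)
  refine le_of_mul_le_mul_left ?_ hm
  calc (m : ℝ) * (Fintype.card ι * a ^ ((k : ℝ)⁻¹))
      = ∑ _ ∈ powersetCard k (univ : Finset ι), k * a ^ ((k : ℝ)⁻¹) := by
        rw [sum_const, nsmul_eq_mul, ← mul_assoc, ← mul_assoc, hcount, mul_comm (m : ℝ)]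
    _ ≤ ∑ S ∈ powersetCard k univ, ∑ j ∈ S, p j := sum_le_sum hamgm
    _ = m * ∑ j, p j := by rw [sum_powersetCard_sum hk, nsmul_eq_mul]

theorem stmt_3 (n k : ℕ) (hk : 1 ≤ k) (hkn : k ≤ n) (p : Fin n → ℝ)
    (hp : ∀ j, p j ∈ Set.Icc (0 : ℝ) 1)
    (hprod : ∀ S : Finset (Fin n), S.card = k → (1 : ℝ)/2 ≤ ∏ j ∈ S, p j)
    (hnk : (1 - 1/(n : ℝ))^k ≤ 1/2) :
    (n : ℝ) - 1 ≤ ∑ j, p j := by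
  have hn : (n : ℝ) ≠ 0 := by norm_cast; omega
  have hroot : 1 - 1 / (n : ℝ) ≤ (1 / 2) ^ ((k : ℝ)⁻¹) := by
    have hk' : (0 : ℝ) < k := by exact_mod_cast hk
    have h1n : 0 ≤ 1 - 1 / (n : ℝ) := by
      rw [sub_nonneg, div_le_one₀ (by positivity)]; exact_mod_cast hk.trans hkn
    rwa [Real.le_rpow_inv_iff_of_pos h1n (by norm_num) hk', Real.rpow_natCast]
  have hsum := card_mul_rpow_inv_le_sum_of_le_prod (fun j ↦ (hp j).1) (by omega)
    (by simpa using hkn) (by norm_num) hprod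
  rw [Fintype.card_fin] at hsum
  calc (n : ℝ) - 1 = n * (1 - 1 / n) := by field_simp
    _ ≤ n * (1 / 2) ^ ((k : ℝ)⁻¹) := by gcongr
    _ ≤ ∑ j, p j := hsum
end

section
/- Let X be uniform on {+,−}, and let X1, X2, X3, X4 be erased versions of X (taking values in {+,−,0}, never contradicting X). If I(Xi; Xj) = 0 for all i ≠ j, then Σ_{i=1}^4 P(Xi = 0) ≥ 3. -/
open MeasureTheory

/-- Shannon entropy (base 2) of a finite-alphabet random variable. -/
noncomputable def entropy {Ω : Type*} [MeasurableSpace Ω] {α : Type*} [Fintype α]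
    (μ : Measure Ω) (X : Ω → α) : ℝ :=
  -∑ a : α, (μ (X ⁻¹' {a})).toReal * Real.logb 2 (μ (X ⁻¹' {a})).toReal

instance : MeasurableSpace (Option Bool) := ⊤
instance : MeasurableSingletonClass (Option Bool) := ⟨fun _ => trivial⟩

/-!
Zero mutual information forces each pair `Xᵢ, Xⱼ` to be independent (equality in Gibbs'
inequality). For each sign `t`, the events `{Xᵢ = t}` are then pairwise independent and contained,
up to null sets, in `{X = t}`, which has probability `1/2`; the second Bonferroni inequality for
any three of them, together with `P(Xᵢ = t) ≤ 1/2`, gives `∑ᵢ P(Xᵢ = t) ≤ 1`. Moreover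
`P(Xᵢ = +) P(Xⱼ = −) = P(Xᵢ = +, Xⱼ = −) = 0` for `i ≠ j`, since that event contradicts `X`. So
either one sign never occurs, or a single channel produces both signs and the other three are
always erased; either way `∑ᵢ (P(Xᵢ = +) + P(Xᵢ = −)) ≤ 1`.
-/

open Real InformationTheory

noncomputable def mutualInfo {Ω γ δ : Type*} [MeasurableSpace Ω] [Fintype γ] [Fintype δ]
    (μ : Measure Ω) (Y : Ω → γ) (Z : Ω → δ) : ℝ :=
  entropy μ Y + entropy μ Z - entropy μ (fun ω => (Y ω, Z ω))

lemma mul_log_sub_add_mul_sub_eq_mul_klFun {x a b : ℝ} (hx : 0 ≤ x) (hxa : x ≤ a)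
    (hxb : x ≤ b) :
    x * (log x - log a - log b) + a * b - x = a * b * klFun (x / (a * b)) := by
  rcases hx.eq_or_lt with rfl | hx
  · simp [klFun_zero]
  have ha : 0 < a := hx.trans_le hxa
  have hb : 0 < b := hx.trans_le hxb
  rw [klFun_apply, log_div hx.ne' (mul_pos ha hb).ne', log_mul ha.ne' hb.ne']
  field_simp
  ring

lemma mul_klFun_div_nonneg {x a b : ℝ} (hx : 0 ≤ x) (hxa : x ≤ a) (hxb : x ≤ b) :
    0 ≤ a * b * klFun (x / (a * b)) :=
  have hab : 0 ≤ a * b := mul_nonneg (hx.trans hxa) (hx.trans hxb)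
  mul_nonneg hab (klFun_nonneg (div_nonneg hx hab))

lemma eq_mul_of_mul_klFun_div_eq_zero {x a b : ℝ} (hx : 0 ≤ x) (hxa : x ≤ a) (hxb : x ≤ b)
    (h : a * b * klFun (x / (a * b)) = 0) : x = a * b := by
  rcases eq_or_ne (a * b) 0 with hab | hab
  · rw [hab]
    rcases mul_eq_zero.1 hab with h0 | h0 <;> linarith
  have hab_pos : 0 < a * b := (mul_nonneg (hx.trans hxa) (hx.trans hxb)).lt_of_ne hab.symm
  rw [mul_eq_zero, klFun_eq_zero_iff (div_nonneg hx hab_pos.le), div_eq_one_iff_eq hab] at h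
  exact h.resolve_left hab

section Entropy

variable {Ω γ δ : Type*} [MeasurableSpace Ω] {μ : Measure Ω} [Fintype γ] [Fintype δ]

lemma log_two_mul_entropy (Y : Ω → γ) :
    log 2 * entropy μ Y = -∑ y, μ.real (Y ⁻¹' {y}) * log (μ.real (Y ⁻¹' {y})) := by
  simp only [entropy, logb, mul_neg, Finset.mul_sum, measureReal_def]
  congr 1
  refine Finset.sum_congr rfl fun y _ => ?_
  field_simp

lemma sum_measureReal_preimage_singleton_eq_one [IsProbabilityMeasure μ] [MeasurableSpace γ]
    [MeasurableSingletonClass γ] {Y : Ω → γ} (hY : Measurable Y) :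
    ∑ y, μ.real (Y ⁻¹' {y}) = 1 := by
  rw [sum_measureReal_preimage_singleton _ fun y _ => hY (measurableSet_singleton y)]
  simp

lemma measureReal_eq_sum_inter_preimage [IsFiniteMeasure μ] [MeasurableSpace δ]
    [MeasurableSingletonClass δ] {Z : Ω → δ} (hZ : Measurable Z)
    (A : Set Ω) : μ.real A = ∑ z, μ.real (A ∩ Z ⁻¹' {z}) := by
  have hfib : ∀ z, MeasurableSet (Z ⁻¹' {z}) := fun z => hZ (measurableSet_singleton z)
  simp_rw [Set.inter_comm A, ← measureReal_restrict_apply (hfib _)]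
  rw [sum_measureReal_preimage_singleton _ fun z _ => hfib z, Finset.coe_univ,
    Set.preimage_univ, measureReal_restrict_apply_univ]

lemma log_two_mul_mutualInfo [IsProbabilityMeasure μ] [MeasurableSpace γ]
    [MeasurableSingletonClass γ] [MeasurableSpace δ] [MeasurableSingletonClass δ]
    {Y : Ω → γ} {Z : Ω → δ} (hY : Measurable Y) (hZ : Measurable Z) :
    log 2 * mutualInfo μ Y Z = ∑ y, ∑ z, μ.real (Y ⁻¹' {y}) * μ.real (Z ⁻¹' {z}) *
      klFun (μ.real (Y ⁻¹' {y} ∩ Z ⁻¹' {z}) / (μ.real (Y ⁻¹' {y}) * μ.real (Z ⁻¹' {z}))) := by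
  set r : γ → δ → ℝ := fun y z => μ.real (Y ⁻¹' {y} ∩ Z ⁻¹' {z})
  set p : γ → ℝ := fun y => μ.real (Y ⁻¹' {y})
  set q : δ → ℝ := fun z => μ.real (Z ⁻¹' {z})
  have hp : ∀ y, p y = ∑ z, r y z := fun y => measureReal_eq_sum_inter_preimage hZ _
  have hq : ∀ z, q z = ∑ y, r y z := fun z => by
    simp only [q, r, Set.inter_comm (Y ⁻¹' _)]
    exact measureReal_eq_sum_inter_preimage hY _
  have hp_one : ∑ y, p y = 1 := sum_measureReal_preimage_singleton_eq_one hY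
  have hpl : ∑ y, p y * log (p y) = ∑ y, ∑ z, r y z * log (p y) :=
    Finset.sum_congr rfl fun y _ => by rw [← Finset.sum_mul, ← hp]
  have hql : ∑ z, q z * log (q z) = ∑ y, ∑ z, r y z * log (q z) := by
    rw [Finset.sum_comm]
    exact Finset.sum_congr rfl fun z _ => by rw [← Finset.sum_mul, ← hq]
  have hpq : ∑ y, ∑ z, p y * q z = 1 := by
    rw [← Finset.sum_mul_sum, hp_one, sum_measureReal_preimage_singleton_eq_one hZ, one_mul]
  have hr : ∑ y, ∑ z, r y z = 1 := by simp_rw [← hp, hp_one]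
  have hrl : log 2 * entropy μ (fun ω => (Y ω, Z ω)) = -∑ y, ∑ z, r y z * log (r y z) := by
    simp only [log_two_mul_entropy, Fintype.sum_prod_type, ← Set.singleton_prod_singleton,
      Set.mk_preimage_prod, r]
  calc log 2 * mutualInfo μ Y Z
      = ∑ y, ∑ z, r y z * log (r y z) - ∑ y, ∑ z, r y z * log (p y)
        - ∑ y, ∑ z, r y z * log (q z) + ∑ y, ∑ z, p y * q z - ∑ y, ∑ z, r y z := by
        rw [← hpl, ← hql, hpq, hr, mutualInfo, mul_sub, mul_add, hrl, log_two_mul_entropy,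
          log_two_mul_entropy]
        ring
    _ = ∑ y, ∑ z, (r y z * (log (r y z) - log (p y) - log (q z)) + p y * q z - r y z) := by
        simp only [mul_sub, Finset.sum_add_distrib, Finset.sum_sub_distrib]
    _ = ∑ y, ∑ z, p y * q z * klFun (r y z / (p y * q z)) :=
        Finset.sum_congr rfl fun y _ => Finset.sum_congr rfl fun z _ =>
          mul_log_sub_add_mul_sub_eq_mul_klFun measureReal_nonneg
            (measureReal_mono Set.inter_subset_left) (measureReal_mono Set.inter_subset_right)

theorem measureReal_inter_preimage_eq_mul_of_mutualInfo_eq_zero [IsProbabilityMeasure μ]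
    [MeasurableSpace γ] [MeasurableSingletonClass γ] [MeasurableSpace δ]
    [MeasurableSingletonClass δ] {Y : Ω → γ} {Z : Ω → δ} (hY : Measurable Y) (hZ : Measurable Z)
    (h : mutualInfo μ Y Z = 0) (y : γ) (z : δ) :
    μ.real (Y ⁻¹' {y} ∩ Z ⁻¹' {z}) = μ.real (Y ⁻¹' {y}) * μ.real (Z ⁻¹' {z}) := by
  have hsum := log_two_mul_mutualInfo (μ := μ) hY hZ
  rw [h, mul_zero, eq_comm, ← Fintype.sum_prod_type', Fintype.sum_eq_zero_iff_of_nonneg] at hsum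
  · exact eq_mul_of_mul_klFun_div_eq_zero measureReal_nonneg
      (measureReal_mono Set.inter_subset_left) (measureReal_mono Set.inter_subset_right)
      (congrFun hsum (y, z))
  · exact fun w => mul_klFun_div_nonneg measureReal_nonneg
      (measureReal_mono Set.inter_subset_left) (measureReal_mono Set.inter_subset_right)

end Entropy

lemma sum_add_sum_le_one_of_mul_eq_zero {ι : Type*} [Fintype ι] {a b : ι → ℝ}
    (hab : ∀ i, a i + b i ≤ 1) (ha : ∑ i, a i ≤ 1) (hb : ∑ i, b i ≤ 1)
    (hcross : Pairwise fun i j => a i * b j = 0) :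
    ∑ i, a i + ∑ i, b i ≤ 1 := by
  by_cases hb0 : ∀ i, b i = 0
  · simpa [hb0] using ha
  obtain ⟨i, hbi⟩ := not_forall.1 hb0
  have ha_sum : ∑ j, a j = a i :=
    Fintype.sum_eq_single i fun j hj => (mul_eq_zero.1 (hcross hj)).resolve_right hbi
  by_cases hai : a i = 0
  · simpa [ha_sum, hai] using hb
  have hb_sum : ∑ j, b j = b i :=
    Fintype.sum_eq_single i fun j hj => (mul_eq_zero.1 (hcross (Ne.symm hj))).resolve_left hai
  simpa [ha_sum, hb_sum] using hab i

section Events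

variable {Ω : Type*} [MeasurableSpace Ω] {μ : Measure Ω} [IsFiniteMeasure μ]

lemma measureReal_add_add_le_union_add_inter {A B C : Set Ω} (hB : MeasurableSet B)
    (hC : MeasurableSet C) :
    μ.real A + μ.real B + μ.real C ≤
      μ.real (A ∪ B ∪ C) + μ.real (A ∩ B) + μ.real (A ∩ C) + μ.real (B ∩ C) := by
  have hAB := measureReal_union_add_inter (μ := μ) (s := A) hB
  have hABC := measureReal_union_add_inter (μ := μ) (s := A ∪ B) hC
  have hinter : μ.real ((A ∪ B) ∩ C) ≤ μ.real (A ∩ C) + μ.real (B ∩ C) := by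
    rw [Set.union_inter_distrib_right]
    exact measureReal_union_le _ _
  linarith

theorem sum_measureReal_le_one_of_pairwise_indep {T : Set Ω} (hT : μ.real T = 1 / 2)
    {E : Fin 4 → Set Ω} (hE : ∀ i, MeasurableSet (E i)) (hET : ∀ i, E i ≤ᵐ[μ] T)
    (hind : Pairwise fun i j => μ.real (E i ∩ E j) = μ.real (E i) * μ.real (E j)) :
    ∑ i, μ.real (E i) ≤ 1 := by
  have hle : ∀ {S : Set Ω}, S ≤ᵐ[μ] T → μ.real S ≤ 1 / 2 := fun hS =>
    hT ▸ ENNReal.toReal_mono (measure_ne_top μ T) (measure_mono_ae hS)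
  have htriple : ∀ {i j k}, i ≠ j → i ≠ k → j ≠ k →
      μ.real (E i) + μ.real (E j) + μ.real (E k) ≤ 1 / 2 + μ.real (E i) * μ.real (E j)
        + μ.real (E i) * μ.real (E k) + μ.real (E j) * μ.real (E k) := by
    intro i j k hij hik hjk
    have hunion := hle (by simpa only [Set.union_self] using ((hET i).union (hET j)).union (hET k))
    rw [← hind hij, ← hind hik, ← hind hjk]
    linarith [measureReal_add_add_le_union_add_inter (μ := μ) (A := E i) (hE j) (hE k)]
  have h₀ := htriple (i := 0) (j := 1) (k := 2) (by decide) (by decide) (by decide)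
  have h₁ := htriple (i := 0) (j := 1) (k := 3) (by decide) (by decide) (by decide)
  have h₂ := htriple (i := 0) (j := 2) (k := 3) (by decide) (by decide) (by decide)
  have h₃ := htriple (i := 1) (j := 2) (k := 3) (by decide) (by decide) (by decide)
  have hnn : ∀ i, 0 ≤ μ.real (E i) := fun i => measureReal_nonneg
  -- The four triples sum to `3s - 2e₂ ≤ 2`, while `e₂ ≤ 3s²/8` and `s ≤ 2` (`s`, `e₂` the first two
  -- elementary symmetric functions of the `μ.real (E i)`); hence `s ≤ 8/9`.
  rw [Fin.sum_univ_four]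
  nlinarith [hle (hET 0), hle (hET 1), hle (hET 2), hle (hET 3), hnn 0, hnn 1, hnn 2, hnn 3,
    sq_nonneg (μ.real (E 0) - μ.real (E 1)), sq_nonneg (μ.real (E 0) - μ.real (E 2)),
    sq_nonneg (μ.real (E 0) - μ.real (E 3)), sq_nonneg (μ.real (E 1) - μ.real (E 2)),
    sq_nonneg (μ.real (E 1) - μ.real (E 3)), sq_nonneg (μ.real (E 2) - μ.real (E 3))]

end Events

lemma measureReal_none_add_some_add_some {Ω : Type*} [MeasurableSpace Ω] {μ : Measure Ω}
    [IsProbabilityMeasure μ] {Y : Ω → Option Bool} (hY : Measurable Y) :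
    μ.real (Y ⁻¹' {none}) + μ.real (Y ⁻¹' {some true}) + μ.real (Y ⁻¹' {some false}) = 1 := by
  simpa [Fintype.sum_option, Fintype.sum_bool, add_assoc] using
    sum_measureReal_preimage_singleton_eq_one (μ := μ) hY

theorem sum_measureReal_some_add_sum_le_one {Ω : Type*} [MeasurableSpace Ω] {μ : Measure Ω}
    [IsProbabilityMeasure μ] {X : Ω → Bool}
    (hhalf : ∀ t, μ.real (X ⁻¹' {t}) = 1 / 2) {Xe : Fin 4 → Ω → Option Bool}
    (hXe : ∀ i, Measurable (Xe i)) (hcompat : ∀ i t, Xe i ⁻¹' {some t} ≤ᵐ[μ] X ⁻¹' {t})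
    (hind : ∀ i j, i ≠ j → ∀ y z, μ.real (Xe i ⁻¹' {y} ∩ Xe j ⁻¹' {z}) =
      μ.real (Xe i ⁻¹' {y}) * μ.real (Xe j ⁻¹' {z})) :
    ∑ i, μ.real (Xe i ⁻¹' {some true}) + ∑ i, μ.real (Xe i ⁻¹' {some false}) ≤ 1 := by
  have hsum_le : ∀ t, ∑ i, μ.real (Xe i ⁻¹' {some t}) ≤ 1 := fun t =>
    sum_measureReal_le_one_of_pairwise_indep (hhalf t)
      (fun i => hXe i (measurableSet_singleton _)) (fun i => hcompat i t)
      (fun i j hij => hind i j hij _ _)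
  have hcross : Pairwise fun i j =>
      μ.real (Xe i ⁻¹' {some true}) * μ.real (Xe j ⁻¹' {some false}) = 0 := by
    intro i j hij
    rw [← hind i j hij, measureReal_eq_zero_iff]
    refine measure_mono_null_ae ((hcompat i true).inter (hcompat j false)) ?_
    simp [← Set.preimage_inter]
  refine sum_add_sum_le_one_of_mul_eq_zero (fun i => ?_) (hsum_le true) (hsum_le false) hcross
  linarith [measureReal_none_add_some_add_some (μ := μ) (hXe i),
    measureReal_nonneg (μ := μ) (s := Xe i ⁻¹' {none})]

/-- `true` is `+` and `none` is the erasure symbol `0`. -/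
theorem stmt_10 {Ω : Type*} [MeasurableSpace Ω] (μ : Measure Ω) [IsProbabilityMeasure μ]
    (X : Ω → Bool) (hX : Measurable X) (hunif : μ {ω | X ω = true} = 1/2)
    (Xe : Fin 4 → Ω → Option Bool) (hXe : ∀ i, Measurable (Xe i))
    (herased : ∀ i, μ {ω | Xe i ω = some true ∧ X ω = false} = 0 ∧
      μ {ω | Xe i ω = some false ∧ X ω = true} = 0)
    (hindep : ∀ i j, i ≠ j →
      entropy μ (Xe i) + entropy μ (Xe j) - entropy μ (fun ω => (Xe i ω, Xe j ω)) = 0) :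
    (3 : ℝ) ≤ ∑ i, (μ {ω | Xe i ω = none}).toReal := by
  have hhalf : ∀ t, μ.real (X ⁻¹' {t}) = 1 / 2 := by
    have htrue : μ.real (X ⁻¹' {true}) = 1 / 2 := by
      simp [measureReal_def, Set.preimage, hunif, ENNReal.toReal_inv]
    have := sum_measureReal_preimage_singleton_eq_one (μ := μ) hX
    rw [Fintype.sum_bool] at this
    intro t; cases t <;> linarith
  have hcompat : ∀ i t, Xe i ⁻¹' {some t} ≤ᵐ[μ] X ⁻¹' {t} := by
    intro i t
    rw [ae_le_set]
    cases t
    · convert (herased i).2 using 2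
      ext ω; simp
    · convert (herased i).1 using 2
      ext ω; simp
  have hsigned := sum_measureReal_some_add_sum_le_one hhalf hXe hcompat fun i j hij =>
    measureReal_inter_preimage_eq_mul_of_mutualInfo_eq_zero (hXe i) (hXe j) (hindep i j hij)
  have htot := fun i => measureReal_none_add_some_add_some (μ := μ) (hXe i)
  change (3 : ℝ) ≤ ∑ i, μ.real (Xe i ⁻¹' {none})
  simp only [Fin.sum_univ_four] at hsigned ⊢
  linarith [htot 0, htot 1, htot 2, htot 3]
end

section
/- Let x ∈ {+,−}^l be a source string and for each i ∈ {1,...,n} let X_i^l(x) ∈ {+,−,0}^l be erased versions of x (as random functions of a uniform source X^l on {+,−}^l, with independent coordinates over t for the source). Suppose for every coordinate t and all i ≠ j, the random variables X_{it}(X) and X_{jt}(X) are independent. Then max over x ∈ {+,−}^l of Σ_{i=1}^n (1/l) Σ_{t=1}^l d(x_t, X_{it}(x)) ≥ n − 1, where d(x,x̂) = 0 if x̂ = x, 1 if x̂ = 0, and ∞ otherwise. -/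
open MeasureTheory ENNReal

/-- The erasure distortion measure: `0` for a correct symbol, `1` for an erasure
(`none`), and `∞` for an error. -/
noncomputable def erasureDist (x : Bool) (y : Option Bool) : ℝ≥0∞ :=
  match y with
  | none => 1
  | some b => if b = x then 0 else ⊤

/-! Zero mutual information between two finite random variables forces their joint law to charge
every pair of values that the marginals charge (the equality case of Gibbs' inequality). Under the
uniform source, any value of `X_{it}` and any value of `X_{jt}` therefore occur together at some
source string; as erased versions never contradict the source, two distinct terminals can never
reveal opposite bits at the same coordinate. Hence for each `t` some bit `v_t` is revealed by at
most one terminal, and at the source string `v` every coordinate is unerased at most once in total: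
at least `(n - 1) l` of the `n l` reconstructed symbols are erasures. -/

open Finset Real

theorem sub_le_mul_log_sub_log {p q : ℝ} (hp : 0 ≤ p) (hq : 0 ≤ q) (hpq : 0 < p → 0 < q) :
    p - q ≤ p * (log p - log q) := by
  rcases hp.eq_or_lt with rfl | hp
  · simpa using hq
  have hq := hpq hp
  have key := one_sub_inv_le_log_of_pos (div_pos hp hq)
  rw [inv_div, log_div hp.ne' hq.ne'] at key
  calc p - q = p * (1 - q / p) := by field_simp
    _ ≤ p * (log p - log q) := by gcongr

-- Equality case of Gibbs' inequality: zero relative entropy forces `supp q ⊆ supp p`.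
theorem pos_of_sum_mul_log_sub_log_eq_zero {ι : Type*} [Fintype ι] {p q : ι → ℝ}
    (hp : ∀ i, 0 ≤ p i) (hq : ∀ i, 0 ≤ q i) (hpq : ∀ i, 0 < p i → 0 < q i)
    (hsum : ∑ i, p i = ∑ i, q i) (h : ∑ i, p i * (log (p i) - log (q i)) = 0)
    {i : ι} (hqi : 0 < q i) : 0 < p i := by
  by_contra! hpi
  have hpi : p i = 0 := le_antisymm hpi (hp i)
  have hlt : ∑ j, (p j - q j) < ∑ j, p j * (log (p j) - log (q j)) := by
    refine sum_lt_sum (fun j _ ↦ sub_le_mul_log_sub_log (hp j) (hq j) (hpq j))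
      ⟨i, mem_univ _, ?_⟩
    simpa [hpi] using hqi
  rw [sum_sub_distrib, hsum, sub_self, h] at hlt
  exact hlt.false

section Mass

variable {Ω α γ : Type*} [MeasurableSpace Ω] {μ : Measure Ω}

noncomputable def massFun (μ : Measure Ω) (X : Ω → α) (a : α) : ℝ := (μ (X ⁻¹' {a})).toReal

theorem entropy_eq_neg_sum_massFun [Fintype α] (X : Ω → α) :
    entropy μ X = -∑ a, massFun μ X a * logb 2 (massFun μ X a) := rfl

theorem massFun_nonneg (X : Ω → α) (a : α) : 0 ≤ massFun μ X a := toReal_nonneg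

theorem massFun_le_massFun_comp [IsFiniteMeasure μ] (X : Ω → γ) (f : γ → α) (c : γ) :
    massFun μ X c ≤ massFun μ (f ∘ X) (f c) :=
  toReal_mono (measure_ne_top μ _) <| measure_mono fun ω (hω : X ω = c) ↦ by
    simp [Function.comp, hω]

variable [DiscreteMeasurableSpace Ω]

theorem sum_massFun [Fintype α] [IsProbabilityMeasure μ] (X : Ω → α) :
    ∑ a, massFun μ X a = 1 := by
  classical
  simp only [massFun]
  rw [← toReal_sum fun a _ ↦ measure_ne_top μ _,
    sum_measure_preimage_singleton _ fun _ _ ↦ .of_discrete]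
  simp

variable [IsFiniteMeasure μ]

theorem massFun_comp [Fintype γ] [DecidableEq α] (X : Ω → γ) (f : γ → α) (a : α) :
    massFun μ (f ∘ X) a = ∑ c with f c = a, massFun μ X c := by
  simp only [massFun]
  rw [← toReal_sum fun c _ ↦ measure_ne_top μ _,
    sum_measure_preimage_singleton _ fun _ _ ↦ .of_discrete]
  congr 2
  ext ω
  simp

theorem entropy_comp [Fintype α] [Fintype γ] (X : Ω → γ) (f : γ → α) :
    entropy μ (f ∘ X) = -∑ c, massFun μ X c * logb 2 (massFun μ (f ∘ X) (f c)) := by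
  classical
  rw [entropy_eq_neg_sum_massFun, neg_inj, ← sum_fiberwise univ f]
  refine sum_congr rfl fun a _ ↦ ?_
  rw [sum_congr rfl fun c hc ↦ by rw [(mem_filter.1 hc).2], ← sum_mul]
  congr 1
  exact massFun_comp X f a

theorem mutualInfo_eq_sum [Fintype α] [Fintype γ] (A : Ω → α) (B : Ω → γ) :
    entropy μ A + entropy μ B - entropy μ (fun ω ↦ (A ω, B ω)) =
      ∑ p, massFun μ (fun ω ↦ (A ω, B ω)) p * (logb 2 (massFun μ (fun ω ↦ (A ω, B ω)) p)
        - logb 2 (massFun μ A p.1) - logb 2 (massFun μ B p.2)) := by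
  rw [show entropy μ A = entropy μ (Prod.fst ∘ fun ω ↦ (A ω, B ω)) from rfl,
    show entropy μ B = entropy μ (Prod.snd ∘ fun ω ↦ (A ω, B ω)) from rfl,
    entropy_comp, entropy_comp, entropy_eq_neg_sum_massFun]
  simp only [Function.comp_def, mul_sub, sum_sub_distrib]
  ring

theorem massFun_pair_pos_of_mutualInfo_eq_zero [Fintype α] [Fintype γ] [IsProbabilityMeasure μ]
    {A : Ω → α} {B : Ω → γ}
    (h : entropy μ A + entropy μ B - entropy μ (fun ω ↦ (A ω, B ω)) = 0)
    {a : α} {b : γ} (ha : 0 < massFun μ A a) (hb : 0 < massFun μ B b) :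
    0 < massFun μ (fun ω ↦ (A ω, B ω)) (a, b) := by
  set P := massFun μ (fun ω ↦ (A ω, B ω))
  set q : α × γ → ℝ := fun p ↦ massFun μ A p.1 * massFun μ B p.2
  have hPA (p : α × γ) : P p ≤ massFun μ A p.1 := massFun_le_massFun_comp _ Prod.fst p
  have hPB (p : α × γ) : P p ≤ massFun μ B p.2 := massFun_le_massFun_comp _ Prod.snd p
  have hsum : ∑ p, P p = ∑ p, q p := by
    rw [sum_massFun, Fintype.sum_prod_type, ← Fintype.sum_mul_sum, sum_massFun, sum_massFun,
      one_mul]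
  have hlog : ∑ p, P p * (log (P p) - log (q p)) = 0 := by
    have hterm (p : α × γ) : P p * (logb 2 (P p) - logb 2 (massFun μ A p.1)
        - logb 2 (massFun μ B p.2)) = P p * (log (P p) - log (q p)) / Real.log 2 := by
      rcases (show 0 ≤ P p from massFun_nonneg _ p).eq_or_lt with hp | hp
      · rw [← hp]; simp
      rw [log_mul ((hp.trans_le (hPA p)).ne') (hp.trans_le (hPB p)).ne']
      simp only [logb]
      ring
    rw [mutualInfo_eq_sum, sum_congr rfl fun p _ ↦ hterm p, ← sum_div] at h
    exact (div_eq_zero_iff.1 h).resolve_right (log_pos one_lt_two).ne'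
  exact pos_of_sum_mul_log_sub_log_eq_zero (massFun_nonneg _)
    (fun p ↦ mul_nonneg (massFun_nonneg _ _) (massFun_nonneg _ _))
    (fun p hp ↦ mul_pos (hp.trans_le (hPA p)) (hp.trans_le (hPB p))) hsum hlog (mul_pos ha hb)

theorem massFun_uniformOfFintype_pos [Fintype Ω] [Nonempty Ω] (X : Ω → α) (ω : Ω) :
    0 < massFun (PMF.uniformOfFintype Ω).toMeasure X (X ω) := by
  refine toReal_pos ?_ (measure_ne_top _ _)
  rw [Ne, PMF.toMeasure_apply_eq_zero_iff _ .of_discrete, PMF.support_uniformOfFintype,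
    Set.top_eq_univ, Set.univ_disjoint]
  exact Set.nonempty_iff_ne_empty.1 ⟨ω, rfl⟩

theorem exists_eq_and_eq_of_mutualInfo_eq_zero [Fintype Ω] [Nonempty Ω] [Fintype α] [Fintype γ]
    {A : Ω → α} {B : Ω → γ} (h : entropy (PMF.uniformOfFintype Ω).toMeasure A
      + entropy (PMF.uniformOfFintype Ω).toMeasure B
      - entropy (PMF.uniformOfFintype Ω).toMeasure (fun ω ↦ (A ω, B ω)) = 0)
    (ω₁ ω₂ : Ω) : ∃ ω, A ω = A ω₁ ∧ B ω = B ω₂ := by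
  have hpos := massFun_pair_pos_of_mutualInfo_eq_zero h (massFun_uniformOfFintype_pos A ω₁)
    (massFun_uniformOfFintype_pos B ω₂)
  obtain ⟨ω, hω⟩ := nonempty_of_measure_ne_zero (toReal_pos_iff.1 hpos).1.ne'
  exact ⟨ω, Prod.mk.inj hω⟩

end Mass

theorem erasureDist_eq_ite {x : Bool} {y : Option Bool} (h : ∀ b, y = some b → x = b) :
    erasureDist x y = if y = none then 1 else 0 := by
  rcases y with _ | b
  · rfl
  · simp [erasureDist, h b rfl]

theorem sum_erasureDist_eq_card {κ : Type*} [Fintype κ] {x : κ → Bool} {y : κ → Option Bool}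
    (h : ∀ t b, y t = some b → x t = b) :
    ∑ t, erasureDist (x t) (y t) = #{t | y t = none} := by
  simp [erasureDist_eq_ite (h _), sum_boole]

section Erasure

variable {ι κ : Type*} {E : ι → (κ → Bool) → κ → Option Bool}

theorem exists_bit_revealed_by_at_most_one {t : κ}
    (hsep : ∀ i j b x₁ x₂, E i x₁ t = some b → E j x₂ t = some (!b) → i = j) :
    ∃ v, ∀ i j x₁ x₂, E i x₁ t = some v → E j x₂ t = some v → i = j := by
  by_contra! h
  obtain ⟨i, j, x₁, x₂, hi, hj, hij⟩ := h true
  obtain ⟨k, -, x₃, -, hk, -, -⟩ := h false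
  exact hij ((hsep i k true x₁ x₃ hi hk).trans (hsep j k true x₂ x₃ hj hk).symm)

theorem exists_source_card_erased_ge [Fintype ι] [Fintype κ]
    (herased : ∀ i x t b, E i x t = some b → x t = b)
    (hsep : ∀ t i j b x₁ x₂, E i x₁ t = some b → E j x₂ t = some (!b) → i = j) :
    ∃ x, (Fintype.card ι - 1) * Fintype.card κ ≤ ∑ i, #{t | E i x t = none} := by
  choose x hx using fun t ↦ exists_bit_revealed_by_at_most_one (hsep t)
  have hrevealed (t : κ) : #{i | E i x t ≠ none} ≤ 1 := by
    refine card_le_one.2 fun i hi j hj ↦ ?_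
    obtain ⟨b, hb⟩ := Option.ne_none_iff_exists'.1 (mem_filter.1 hi).2
    obtain ⟨c, hc⟩ := Option.ne_none_iff_exists'.1 (mem_filter.1 hj).2
    rw [← herased i x t b hb] at hb
    rw [← herased j x t c hc] at hc
    exact hx t i j x x hb hc
  have htotal : ∑ i, #{t | E i x t ≠ none} ≤ Fintype.card κ := by
    simp only [card_filter]
    rw [sum_comm, ← card_univ, card_eq_sum_ones]
    exact sum_le_sum fun t _ ↦ (card_filter _ _).symm.trans_le (hrevealed t)
  have hsplit : ∑ i, (#{t | E i x t = none} + #{t | E i x t ≠ none}) =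
      Fintype.card ι * Fintype.card κ := by
    simp [card_filter_add_card_filter_not]
  refine ⟨x, ?_⟩
  rw [sum_add_distrib] at hsplit
  rw [Nat.sub_one_mul]
  omega

end Erasure

theorem stmt_12_general (n l : ℕ) (hl : 1 ≤ l)
    (E : Fin n → (Fin l → Bool) → (Fin l → Option Bool))
    (herased : ∀ i x t b, E i x t = some b → x t = b)
    (hindep : ∀ t : Fin l, ∀ i j : Fin n, i ≠ j →
      entropy (PMF.uniformOfFintype (Fin l → Bool)).toMeasure (fun x => E i x t)
        + entropy (PMF.uniformOfFintype (Fin l → Bool)).toMeasure (fun x => E j x t)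
        - entropy (PMF.uniformOfFintype (Fin l → Bool)).toMeasure
            (fun x => (E i x t, E j x t)) = 0) :
    ∃ x : Fin l → Bool,
      (n : ℝ≥0∞) - 1 ≤ ∑ i : Fin n, (l : ℝ≥0∞)⁻¹ * ∑ t, erasureDist (x t) (E i x t) := by
  have hsep (t i j b x₁ x₂) (h₁ : E i x₁ t = some b) (h₂ : E j x₂ t = some (!b)) : i = j := by
    by_contra hij
    obtain ⟨x, hi, hj⟩ := exists_eq_and_eq_of_mutualInfo_eq_zero (hindep t i j hij) x₁ x₂
    have := (herased i x t b (hi.trans h₁)).symm.trans (herased j x t _ (hj.trans h₂))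
    simp at this
  obtain ⟨x, hx⟩ := exists_source_card_erased_ge herased hsep
  simp only [Fintype.card_fin] at hx
  refine ⟨x, ?_⟩
  have hl0 : (l : ℝ≥0∞) ≠ 0 := by exact_mod_cast (by omega : l ≠ 0)
  calc (n : ℝ≥0∞) - 1 = (l : ℝ≥0∞)⁻¹ * ((n - 1) * l : ℕ) := by
        rw [Nat.cast_mul, mul_comm, mul_assoc, ENNReal.mul_inv_cancel hl0 (natCast_ne_top l),
          mul_one, natCast_sub, Nat.cast_one]
    _ ≤ (l : ℝ≥0∞)⁻¹ * ∑ i, (#{t | E i x t = none} : ℕ) := by gcongr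
    _ = ∑ i, (l : ℝ≥0∞)⁻¹ * ∑ t, erasureDist (x t) (E i x t) := by
        simp only [Nat.cast_sum, mul_sum, sum_erasureDist_eq_card (herased _ x)]

/-- Lemma `cases`: `X^l` is i.i.d. uniform on `{+,−}^l` (modelled by the uniform
measure on `Fin l → Bool`), `E i x` is the erased version of the source string `x`
produced at terminal `i` (never contradicting `x`), and for every coordinate `t` the
random symbols `E i (X) t` and `E j (X) t` are independent (`I(X_{it};X_{jt}) = 0`)
for `i ≠ j`.  Then `max_x ∑ᵢ (1/l) ∑ₜ d(xₜ, E i x t) ≥ n − 1`. -/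
theorem stmt_12 (n l : ℕ) (hn : 1 ≤ n) (hl : 1 ≤ l)
    (E : Fin n → (Fin l → Bool) → (Fin l → Option Bool))
    (herased : ∀ i x t b, E i x t = some b → x t = b)
    (hindep : ∀ t : Fin l, ∀ i j : Fin n, i ≠ j →
      entropy (PMF.uniformOfFintype (Fin l → Bool)).toMeasure (fun x => E i x t)
        + entropy (PMF.uniformOfFintype (Fin l → Bool)).toMeasure (fun x => E j x t)
        - entropy (PMF.uniformOfFintype (Fin l → Bool)).toMeasure
            (fun x => (E i x t, E j x t)) = 0) :
    ∃ x : Fin l → Bool,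
      (n : ℝ≥0∞) - 1 ≤ ∑ i : Fin n, (l : ℝ≥0∞)⁻¹ * ∑ t, erasureDist (x t) (E i x t) :=
  stmt_12_general n l hl E herased hindep
end

section
/- Fix integers 1 ≤ k ≤ n and reals D_n, D_k ∈ (0,1). If sup_{λ > 0} [ (n/k − 1)·ln(1+λ) + ln(D_n + λ) − (n/k)·ln(D_k + λ) ] = 0, then D_k ≥ (k/n)·D_n + (n−k)/n. -/
/-!
Put `x = D_k + λ`. Then `x` times the function under the supremum is
`(n/k - 1) · x log(1 + (1 - D_k)/x) + x log(1 + (D_n - D_k)/x)`, which tends to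
`(n/k - 1)(1 - D_k) + (D_n - D_k)` as `x → ∞`. The supremum being `0` makes the function
nonpositive, so this limit is nonpositive, and multiplying it by `k` gives the claim.
-/

open Filter Topology Real

theorem tendsto_mul_log_add_sub_log_atTop (a : ℝ) :
    Tendsto (fun x => x * (log (x + a) - log x)) atTop (𝓝 a) := by
  refine (tendsto_mul_log_one_add_div_atTop a).congr' ?_
  filter_upwards [eventually_gt_atTop 0, eventually_gt_atTop (-a)] with x hx hxa
  rw [← log_div (by linarith) hx.ne', add_div, div_self hx.ne']

theorem tendsto_mul_log_add_sub_log_add_atTop (a b : ℝ) :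
    Tendsto (fun x => x * (log (x + a) - log (x + b))) atTop (𝓝 (a - b)) := by
  refine ((tendsto_mul_log_add_sub_log_atTop a).sub
    (tendsto_mul_log_add_sub_log_atTop b)).congr fun x => ?_
  ring

theorem linear_le_zero_of_log_combination_eventually_nonpos {p q a b d : ℝ}
    (h : ∀ᶠ x in atTop, p * log (a + x) + q * log (b + x) - (p + q) * log (d + x) ≤ 0) :
    p * (a - d) + q * (b - d) ≤ 0 := by
  have hlim : Tendsto (fun x => x * (p * (log (x + a) - log (x + d))
      + q * (log (x + b) - log (x + d)))) atTop (𝓝 (p * (a - d) + q * (b - d))) := by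
    refine (((tendsto_mul_log_add_sub_log_add_atTop a d).const_mul p).add
      ((tendsto_mul_log_add_sub_log_add_atTop b d).const_mul q)).congr fun x => ?_
    ring
  refine le_of_tendsto hlim ?_
  filter_upwards [h, eventually_gt_atTop 0] with x hx hx0
  refine mul_nonpos_of_nonneg_of_nonpos hx0.le (le_of_eq_of_le ?_ hx)
  simp only [add_comm x]
  ring

theorem stmt_15_general (n k : ℕ) (hk : 1 ≤ k) (hkn : k ≤ n) (Dn Dk : ℝ)
    (hsup : IsLUB {y : ℝ | ∃ lam : ℝ, 0 < lam ∧
        y = ((n : ℝ)/k - 1) * Real.log (1 + lam) + Real.log (Dn + lam)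
              - ((n : ℝ)/k) * Real.log (Dk + lam)} 0) :
    (k/(n : ℝ)) * Dn + ((n : ℝ) - k)/n ≤ Dk := by
  have hk0 : (0 : ℝ) < k := by exact_mod_cast hk
  have hn0 : (0 : ℝ) < n := by exact_mod_cast hk.trans hkn
  have hnonpos : ∀ᶠ lam in atTop, ((n : ℝ)/k - 1) * log (1 + lam) + 1 * log (Dn + lam)
      - ((n : ℝ)/k - 1 + 1) * log (Dk + lam) ≤ 0 := by
    filter_upwards [eventually_gt_atTop 0] with lam hlam
    rw [one_mul, sub_add_cancel]
    exact hsup.1 ⟨lam, hlam, rfl⟩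
  have hlimit := linear_le_zero_of_log_combination_eventually_nonpos hnonpos
  rw [div_mul_eq_mul_div, ← add_div, div_le_iff₀ hn0]
  have hscaled : k * ((n/k - 1) * (1 - Dk) + 1 * (Dn - Dk)) = k * Dn + (n - k) - Dk * n := by
    field_simp
    ring
  linarith [mul_nonpos_of_nonneg_of_nonpos hk0.le hlimit]

/-- Analytic core of Theorem 10: if
`sup_{λ>0} [(n/k − 1)ln(1+λ) + ln(Dₙ+λ) − (n/k)ln(D_k+λ)] = 0`,
then `D_k ≥ (k/n)Dₙ + (n−k)/n`. -/
theorem stmt_15 (n k : ℕ) (hk : 1 ≤ k) (hkn : k ≤ n) (Dn Dk : ℝ)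
    (hDn : Dn ∈ Set.Ioo (0 : ℝ) 1) (hDk : Dk ∈ Set.Ioo (0 : ℝ) 1)
    (hsup : IsLUB {y : ℝ | ∃ lam : ℝ, 0 < lam ∧
        y = ((n : ℝ)/k - 1) * Real.log (1 + lam) + Real.log (Dn + lam)
              - ((n : ℝ)/k) * Real.log (Dk + lam)} 0) :
    (k/(n : ℝ)) * Dn + ((n : ℝ) - k)/n ≤ Dk :=
  stmt_15_general n k hk hkn Dn Dk hsup
end

section
/- Suppose descriptions of a length-l binary source each have rate R (i.e., each message takes at most 2^{lR} values), and the decoder receiving any k of the n messages reconstructs under erasure distortion with expected distortion at most D_k where kR = 1 − D_k. Then for every subset {s1,...,sk} of k encoders, I_k(f_{s1}; ...; f_{sk}) = 0, i.e., the k messages are mutually independent, when the source is i.i.d. uniform on {+,−}^l. -/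
open MeasureTheory ENNReal

/-!
Finite expected erasure distortion rules out decoding errors, so a decoder that sees the
message tuple `m` pins the source down up to its erased coordinates: the fibre of `m` has at
most `2 ^ e(m)` source words, where `e(m)` is the number of erasures. Hence the joint entropy
of the `k` messages is at least `l - E[e] ≥ l (1 - D_k)`. Each single message has entropy at
most `log M ≤ l R`, so the sum of the marginal entropies is at most `k l R = l (1 - D_k)`.
Subadditivity of entropy (Gibbs' inequality against the product of the marginals) closes the
chain, forcing equality.
-/

open Real Finset

theorem sum_mul_logb_le_sum_mul_logb {β : Type*} [Fintype β] {b : ℝ} (hb : 1 < b)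
    {p q : β → ℝ} (hp : ∀ a, 0 ≤ p a) (hq : ∀ a, 0 ≤ q a) (hpq : ∀ a, 0 < p a → 0 < q a)
    (hsum : ∑ a, q a ≤ ∑ a, p a) :
    ∑ a, p a * logb b (q a) ≤ ∑ a, p a * logb b (p a) := by
  have hterm : ∀ a, p a * (log (q a) - log (p a)) ≤ q a - p a := by
    intro a
    rcases (hp a).eq_or_lt with hpa | hpa
    · simp [← hpa, hq a]
    · have hqa := hpq a hpa
      have := mul_le_mul_of_nonneg_left (log_le_sub_one_of_pos (div_pos hqa hpa)) hpa.le
      rwa [log_div hqa.ne' hpa.ne', mul_sub_one, mul_div_cancel₀ _ hpa.ne'] at this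
  have hlog : ∑ a, p a * (log (q a) - log (p a)) ≤ 0 :=
    (sum_le_sum fun a _ => hterm a).trans (by rw [sum_sub_distrib]; linarith)
  have hdiv : ∑ a, p a * logb b (q a) - ∑ a, p a * logb b (p a)
      = (∑ a, p a * (log (q a) - log (p a))) / log b := by
    simp only [← sum_sub_distrib, sum_div, logb]
    congr! 1 with a
    ring
  have : ∑ a, p a * logb b (q a) - ∑ a, p a * logb b (p a) ≤ 0 := by
    rw [hdiv]; exact div_nonpos_of_nonpos_of_nonneg hlog (log_pos hb).le
  linarith

section Entropy

variable {Ω α : Type*} [MeasurableSpace Ω] [Fintype α]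

theorem entropy_eq (μ : Measure Ω) (X : Ω → α) :
    entropy μ X = -∑ a, μ.real (X ⁻¹' {a}) * logb 2 (μ.real (X ⁻¹' {a})) := rfl

theorem measurableSet_preimage_of_preimage_singleton {X : Ω → α}
    (hX : ∀ a, MeasurableSet (X ⁻¹' {a})) (s : Set α) : MeasurableSet (X ⁻¹' s) := by
  rw [← Set.biUnion_preimage_singleton]
  exact .biUnion s.to_countable fun a _ => hX a

theorem sum_measureReal_preimage_singleton_eq_one_s16 (μ : Measure Ω) [IsProbabilityMeasure μ]
    {X : Ω → α} (hX : ∀ a, MeasurableSet (X ⁻¹' {a})) :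
    ∑ a, μ.real (X ⁻¹' {a}) = 1 := by
  rw [sum_measureReal_preimage_singleton _ fun a _ => hX a, coe_univ, Set.preimage_univ,
    probReal_univ]

theorem sum_measureReal_preimage_mul_comp {β : Type*} [Fintype β]
    (μ : Measure Ω) [IsFiniteMeasure μ] {X : Ω → α} (hX : ∀ a, MeasurableSet (X ⁻¹' {a}))
    (φ : α → β) (h : β → ℝ) :
    ∑ a, μ.real (X ⁻¹' {a}) * h (φ a) = ∑ b, μ.real ((fun ω => φ (X ω)) ⁻¹' {b}) * h b := by
  classical
  rw [← sum_fiberwise univ φ]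
  refine sum_congr rfl fun b _ => ?_
  have hfiber : (fun ω => φ (X ω)) ⁻¹' {b} = X ⁻¹' ↑({a | φ a = b} : Finset α) := by
    ext ω; simp
  rw [hfiber, ← sum_measureReal_preimage_singleton _ fun a _ => hX a, sum_mul]
  exact sum_congr rfl fun a ha => by rw [(mem_filter.mp ha).2]

theorem neg_sum_mul_logb_le_entropy (μ : Measure Ω) (X : Ω → α) {w : α → ℝ}
    (hw : ∀ a, μ.real (X ⁻¹' {a}) ≤ w a) :
    -∑ a, μ.real (X ⁻¹' {a}) * logb 2 (w a) ≤ entropy μ X := by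
  rw [entropy_eq, neg_le_neg_iff]
  refine sum_le_sum fun a _ => ?_
  rcases (measureReal_nonneg : 0 ≤ μ.real (X ⁻¹' {a})).eq_or_lt with h | h
  · simp [← h]
  · exact mul_le_mul_of_nonneg_left (logb_le_logb_of_le one_lt_two h (hw a)) h.le

theorem entropy_le_logb_card (μ : Measure Ω) [IsProbabilityMeasure μ] {X : Ω → α}
    (hX : ∀ a, MeasurableSet (X ⁻¹' {a})) :
    entropy μ X ≤ logb 2 (Fintype.card α) := by
  have hsum := sum_measureReal_preimage_singleton_eq_one_s16 μ hX
  have hgibbs := sum_mul_logb_le_sum_mul_logb (p := fun a => μ.real (X ⁻¹' {a}))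
    (q := fun _ => (Fintype.card α : ℝ)⁻¹) one_lt_two (fun _ => measureReal_nonneg)
    (fun _ => by positivity) (fun a _ => by have : Nonempty α := ⟨a⟩; positivity)
    (by simpa [hsum] using mul_inv_le_one (a := (Fintype.card α : ℝ)))
  rw [← sum_mul, hsum, one_mul, logb_inv] at hgibbs
  rw [entropy_eq]
  linarith

theorem entropy_pi_le_sum {ι : Type*} [Fintype ι] [DecidableEq ι] {β : ι → Type*}
    [∀ i, Fintype (β i)] (μ : Measure Ω) [IsProbabilityMeasure μ]
    {X : Ω → (i : ι) → β i} (hX : ∀ m, MeasurableSet (X ⁻¹' {m})) :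
    entropy μ X ≤ ∑ i, entropy μ (fun ω => X ω i) := by
  let P m := μ.real (X ⁻¹' {m})
  let Q i (a : β i) := μ.real ((fun ω => X ω i) ⁻¹' {a})
  have hPQ : ∀ m i, P m ≤ Q i (m i) := fun m i =>
    measureReal_mono fun ω (hω : X ω = m) => by simp [hω]
  have hQ : ∀ i, ∑ a, Q i a = 1 := fun i => sum_measureReal_preimage_singleton_eq_one_s16 μ
    fun a => measurableSet_preimage_of_preimage_singleton hX {m | m i = a}
  have hgibbs := sum_mul_logb_le_sum_mul_logb one_lt_two (fun _ => measureReal_nonneg)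
    (fun _ => prod_nonneg fun _ _ => measureReal_nonneg)
    (fun m hm => prod_pos fun i _ => hm.trans_le (hPQ m i))
    (by rw [← Fintype.prod_sum Q, sum_measureReal_preimage_singleton_eq_one_s16 μ hX]; simp [hQ])
  have hsplit : ∀ m, P m * logb 2 (∏ i, Q i (m i)) = ∑ i, P m * logb 2 (Q i (m i)) := by
    intro m
    rcases (measureReal_nonneg : 0 ≤ P m).eq_or_lt with h | h
    · simp [P, ← h]
    · rw [logb_prod _ _ fun i _ => (h.trans_le (hPQ m i)).ne', mul_sum]
  have hmarg : ∀ i, ∑ m, P m * logb 2 (Q i (m i)) = ∑ a, Q i a * logb 2 (Q i a) := fun i =>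
    sum_measureReal_preimage_mul_comp μ hX (fun m => m i) (fun a => logb 2 (Q i a))
  calc entropy μ X = -∑ m, P m * logb 2 (P m) := rfl
    _ ≤ -∑ m, P m * logb 2 (∏ i, Q i (m i)) := neg_le_neg hgibbs
    _ = ∑ i, entropy μ (fun ω => X ω i) := by
      rw [sum_congr rfl fun m _ => hsplit m, sum_comm, ← sum_neg_distrib]
      exact sum_congr rfl fun i _ => by rw [hmarg]; rfl

end Entropy

theorem measureReal_uniformOfFintype {Ω : Type*} [Fintype Ω] [Nonempty Ω] [MeasurableSpace Ω]
    [DiscreteMeasurableSpace Ω] (s : Set Ω) :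
    (PMF.uniformOfFintype Ω).toMeasure.real s = Nat.card s / Fintype.card Ω := by
  classical
  rw [measureReal_def, PMF.toMeasure_uniformOfFintype_apply s .of_discrete, ENNReal.toReal_div]
  simp [Nat.card_eq_fintype_card]

section Erasure

variable {ι : Type*} [Fintype ι]

def erasures {β : Type*} (y : ι → Option β) : ℕ := #{t | y t = none}

theorem sum_erasureDist_eq_erasures {x : ι → Bool} {y : ι → Option Bool}
    (hy : ∀ t b, y t = some b → b = x t) :
    ∑ t, erasureDist (x t) (y t) = erasures y := by
  rw [erasures, card_filter, Nat.cast_sum]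
  refine sum_congr rfl fun t _ => ?_
  rcases hyt : y t with _ | b
  · simp [erasureDist]
  · simp [erasureDist, hy t b hyt]

-- A decoder that never errs can confuse two source words only in its erased coordinates.
theorem card_preimage_le_two_pow_erasures {α : Type*} (F : (ι → Bool) → α)
    (G : α → ι → Option Bool) (hFG : ∀ x t b, G (F x) t = some b → b = x t) (m : α) :
    Nat.card (F ⁻¹' {m}) ≤ 2 ^ erasures (G m) := by
  classical
  have hinj : Function.Injective
      fun (x : F ⁻¹' {m}) (t : {t // G m t = none}) => x.1 t.1 := by
    rintro ⟨x, hx⟩ ⟨y, hy⟩ hxy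
    ext t
    rcases hGt : G m t with _ | b
    · exact congrFun hxy ⟨t, hGt⟩
    · show x t = y t
      rw [← hFG x t b (by rw [hx, hGt]), ← hFG y t b (by rw [hy, hGt])]
  simpa [Nat.card_eq_fintype_card, Fintype.card_subtype, erasures] using
    Nat.card_le_card_of_injective _ hinj

theorem card_sub_inv_two_pow_mul_sum_erasures_le_entropy [DecidableEq ι] {α : Type*} [Fintype α]
    (F : (ι → Bool) → α) (G : α → ι → Option Bool)
    (hFG : ∀ x t b, G (F x) t = some b → b = x t) :
    (Fintype.card ι : ℝ) - (2 ^ Fintype.card ι : ℝ)⁻¹ * ∑ x, (erasures (G (F x)) : ℝ)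
      ≤ entropy (PMF.uniformOfFintype (ι → Bool)).toMeasure F := by
  classical
  set n := Fintype.card ι
  set μ := (PMF.uniformOfFintype (ι → Bool)).toMeasure
  have hcard : (Fintype.card (ι → Bool) : ℝ) = 2 ^ n := by simp [n]
  have hfiber : ∀ m, μ.real (F ⁻¹' {m}) ≤ 2 ^ erasures (G m) / 2 ^ n := fun m => by
    rw [measureReal_uniformOfFintype, hcard]
    gcongr
    exact_mod_cast card_preimage_le_two_pow_erasures F G hFG m
  have hlogb : ∀ m, logb 2 (2 ^ erasures (G m) / 2 ^ n) = erasures (G m) - n := fun m => by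
    rw [logb_div (by positivity) (by positivity), logb_pow, logb_pow, logb_self_eq_one one_lt_two,
      mul_one, mul_one]
  have hexpect : ∑ m, μ.real (F ⁻¹' {m}) * erasures (G m) =
      (2 ^ n : ℝ)⁻¹ * ∑ x, (erasures (G (F x)) : ℝ) := by
    rw [← sum_measureReal_preimage_mul_comp μ (X := fun x => x) (fun _ => .of_discrete) F
      (fun m => (erasures (G m) : ℝ)), mul_sum]
    refine sum_congr rfl fun x _ => ?_
    rw [measureReal_uniformOfFintype, hcard]
    simp
  have hsum := sum_measureReal_preimage_singleton_eq_one_s16 μ (X := F) fun _ => .of_discrete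
  calc (n : ℝ) - (2 ^ n : ℝ)⁻¹ * ∑ x, (erasures (G (F x)) : ℝ)
      = -∑ m, μ.real (F ⁻¹' {m}) * logb 2 (2 ^ erasures (G m) / 2 ^ n) := by
        simp only [hlogb, mul_sub, sum_sub_distrib, ← sum_mul, hsum, hexpect]
        ring
    _ ≤ entropy μ F := neg_sum_mul_logb_le_entropy μ F hfiber

end Erasure

noncomputable def expectedErasureDist (l : ℕ) (D : (Fin l → Bool) → Fin l → Option Bool) :
    ℝ≥0∞ :=
  ∑ x : Fin l → Bool, ((Fintype.card (Fin l → Bool) : ℝ≥0∞))⁻¹ *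
    ((l : ℝ≥0∞)⁻¹ * ∑ t, erasureDist (x t) (D x t))

theorem eq_of_expectedErasureDist_ne_top {l : ℕ} {D : (Fin l → Bool) → Fin l → Option Bool}
    (h : expectedErasureDist l D ≠ ⊤) (x : Fin l → Bool) (t : Fin l) (b : Bool)
    (hb : D x t = some b) : b = x t := by
  by_contra hne
  have herr : erasureDist (x t) (D x t) = ⊤ := by simp [hb, erasureDist, hne]
  refine h (ENNReal.sum_eq_top.mpr ⟨x, mem_univ x, ?_⟩)
  simp [ENNReal.mul_eq_top, ENNReal.sum_eq_top]
  exact .inl ⟨t, herr⟩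

theorem inv_two_pow_mul_sum_erasures_le {l : ℕ} {D : (Fin l → Bool) → Fin l → Option Bool} {d : ℝ}
    (hd : 0 ≤ d) (hD : ∀ x t b, D x t = some b → b = x t)
    (h : expectedErasureDist l D ≤ ENNReal.ofReal d) :
    (2 ^ l : ℝ)⁻¹ * ∑ x, (erasures (D x) : ℝ) ≤ l * d := by
  rcases l.eq_zero_or_pos with rfl | hl
  · simp [erasures]
  have hreal := ENNReal.toReal_le_of_le_ofReal hd h
  simp only [expectedErasureDist, fun x => sum_erasureDist_eq_erasures (hD x)] at hreal
  rw [ENNReal.toReal_sum (by finiteness)] at hreal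
  simp only [Fintype.card_pi, Fintype.card_bool, prod_const, card_univ, Fintype.card_fin,
    Nat.cast_pow, Nat.cast_ofNat, toReal_mul, toReal_inv, toReal_pow, toReal_ofNat,
    toReal_natCast] at hreal
  rwa [← mul_sum, ← mul_sum, mul_left_comm, inv_mul_le_iff₀ (by positivity)] at hreal

theorem stmt_16_general (n k l : ℕ)
    (R Dk : ℝ) (hner : (k : ℝ) * R = 1 - Dk) (hDk : 0 ≤ Dk)
    (M : Fin n → ℕ)
    (hrate : ∀ i, (M i : ℝ) ≤ (2 : ℝ) ^ ((l : ℝ) * R))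
    (f : (i : Fin n) → (Fin l → Bool) → Fin (M i))
    (g : (s : Fin k → Fin n) → ((j : Fin k) → Fin (M (s j))) → (Fin l → Option Bool))
    (hdist : ∀ s : Fin k → Fin n, Function.Injective s →
      ∑ x : Fin l → Bool, ((Fintype.card (Fin l → Bool) : ℝ≥0∞))⁻¹ *
          ((l : ℝ≥0∞)⁻¹ * ∑ t, erasureDist (x t) (g s (fun j => f (s j) x) t))
        ≤ ENNReal.ofReal Dk)
    (s : Fin k → Fin n) (hs : Function.Injective s) :
    (∑ j, entropy (PMF.uniformOfFintype (Fin l → Bool)).toMeasure (fun x => f (s j) x))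
      - entropy (PMF.uniformOfFintype (Fin l → Bool)).toMeasure
          (fun x j => f (s j) x) = 0 := by
  set μ := (PMF.uniformOfFintype (Fin l → Bool)).toMeasure
  set X : (Fin l → Bool) → (j : Fin k) → Fin (M (s j)) := fun x j => f (s j) x
  have hD : expectedErasureDist l (fun x => g s (X x)) ≤ ENNReal.ofReal Dk := hdist s hs
  have hexact := eq_of_expectedErasureDist_ne_top (ne_top_of_le_ne_top ofReal_ne_top hD)
  have hjoint : l * (1 - Dk) ≤ entropy μ X := by
    have hlow := card_sub_inv_two_pow_mul_sum_erasures_le_entropy X (g s) hexact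
    have herasures := inv_two_pow_mul_sum_erasures_le hDk hexact hD
    rw [Fintype.card_fin] at hlow
    linarith
  have hmarg : ∀ j, entropy μ (fun x => X x j) ≤ l * R := fun j => by
    have hM : (0 : ℝ) < M (s j) := Nat.cast_pos.mpr (Fin.pos (f (s j) fun _ => false))
    calc entropy μ (fun x => X x j) ≤ logb 2 (M (s j)) := by
          simpa using entropy_le_logb_card μ (X := fun x => X x j) fun _ => .of_discrete
      _ ≤ logb 2 (2 ^ (l * R)) := logb_le_logb_of_le one_lt_two hM (hrate (s j))
      _ = l * R := logb_rpow two_pos (by norm_num)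
  have hsub := entropy_pi_le_sum μ (X := X) fun _ => .of_discrete
  have hsum : ∑ j, entropy μ (fun x => X x j) ≤ l * (1 - Dk) := by
    calc _ ≤ ∑ j : Fin k, (l * R : ℝ) := sum_le_sum fun j _ => hmarg j
      _ = l * (1 - Dk) := by
        rw [sum_const, card_univ, Fintype.card_fin, nsmul_eq_mul, ← hner]; ring
  linarith

/-- Equation (7) of Appendix G: with an i.i.d. uniform binary source of length `l`,
deterministic encoders `f i` of rate `R` (at most `2^{lR}` messages each), and decoders
achieving expected erasure distortion at most `D_k` from every `k` of the `n` messages,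
where `kR = 1 − D_k` (no excess rate), every `k` messages are mutually independent:
`I_k(f_{s₁};…;f_{s_k}) = ∑ⱼ H(f_{sⱼ}) − H(f_{s₁},…,f_{s_k}) = 0`. -/
theorem stmt_16 (n k l : ℕ) (hk : 1 ≤ k) (hkn : k ≤ n) (hl : 1 ≤ l)
    (R Dk : ℝ) (hner : (k : ℝ) * R = 1 - Dk) (hDk : 0 ≤ Dk)
    (M : Fin n → ℕ) (hM : ∀ i, 1 ≤ M i)
    (hrate : ∀ i, (M i : ℝ) ≤ (2 : ℝ) ^ ((l : ℝ) * R))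
    (f : (i : Fin n) → (Fin l → Bool) → Fin (M i))
    (g : (s : Fin k → Fin n) → ((j : Fin k) → Fin (M (s j))) → (Fin l → Option Bool))
    (hdist : ∀ s : Fin k → Fin n, Function.Injective s →
      ∑ x : Fin l → Bool, ((Fintype.card (Fin l → Bool) : ℝ≥0∞))⁻¹ *
          ((l : ℝ≥0∞)⁻¹ * ∑ t, erasureDist (x t) (g s (fun j => f (s j) x) t))
        ≤ ENNReal.ofReal Dk)
    (s : Fin k → Fin n) (hs : Function.Injective s) :
    (∑ j, entropy (PMF.uniformOfFintype (Fin l → Bool)).toMeasure (fun x => f (s j) x))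
      - entropy (PMF.uniformOfFintype (Fin l → Bool)).toMeasure
          (fun x j => f (s j) x) = 0 :=
  stmt_16_general n k l R Dk hner hDk M hrate f g hdist s hs
end
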